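/- Suppose u ∈ V satisfies a(u, v) = f(v) for all v ∈ V. Let V_n and V^R be finite-dimensional subspaces of V, let u_n be a Galerkin solution on V_n, and let u^R be a Galerkin solution on V^R. Then ‖u − u^R‖_V ≤ (γ/α) ‖u_n − P_{V^R} u_n‖_V + (γ/α) ‖u − u_n‖_V. -/

import Mathlib

open scoped RealInnerProductSpace

/-- Orthogonal projection onto a submodule, as a plain function; it equals the usual
orthogonal projection whenever the submodule is finite-dimensional. -/
noncomputable def orthProj {V : Type*} [NormedAddCommGroup V] [InnerProductSpace ℝ V]
    (K : Submodule ℝ V) (x : V) : V := by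
  classical
  exact if h : FiniteDimensional ℝ K then
    haveI := h
    (K.orthogonalProjectionOnto x : V)
  else 0

/-!
Galerkin orthogonality `a (u - u^R) w = 0` on `V^R` and coercivity give Céa's lemma
`α ‖u - u^R‖ ≤ γ ‖u - w‖` for every `w ∈ V^R`. Taking `w = P_{V^R} u_n` and splitting
`u - w = (u - u_n) + (u_n - w)` yields the bound.
-/

theorem orthProj_mem {V : Type*} [NormedAddCommGroup V] [InnerProductSpace ℝ V]
    (K : Submodule ℝ V) [FiniteDimensional ℝ K] (x : V) : orthProj K x ∈ K := by
  simp only [orthProj, dif_pos ‹FiniteDimensional ℝ K›]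
  exact (K.orthogonalProjectionOnto x).2

theorem nonneg_of_abs_le_mul_norm_mul_norm {E : Type*} [NormedAddCommGroup E] [Module ℝ E]
    [Nontrivial E] (a : E →ₗ[ℝ] E →ₗ[ℝ] ℝ) {γ : ℝ}
    (hcont : ∀ v w : E, |a v w| ≤ γ * ‖v‖ * ‖w‖) : 0 ≤ γ := by
  obtain ⟨v, hv⟩ := exists_ne (0 : E)
  have hv_pos : 0 < ‖v‖ := norm_pos_iff.mpr hv
  have : 0 ≤ γ * (‖v‖ * ‖v‖) := by
    rw [← mul_assoc]; exact (abs_nonneg _).trans (hcont v v)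
  exact nonneg_of_mul_nonneg_left this (mul_pos hv_pos hv_pos)

section Galerkin

variable {E : Type*} [SeminormedAddCommGroup E] [Module ℝ E] (a : E →ₗ[ℝ] E →ₗ[ℝ] ℝ)

theorem galerkin_orthogonality {f : E →ₗ[ℝ] ℝ} {u uW : E} {W : Submodule ℝ E}
    (hu : ∀ v, a u v = f v) (hGal : ∀ w ∈ W, a uW w = f w) :
    ∀ w ∈ W, a (u - uW) w = 0 := by
  intro w hw
  rw [map_sub, LinearMap.sub_apply, hu w, hGal w hw, sub_self]

theorem cea_lemma {α γ : ℝ} (hγ : 0 ≤ γ)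
    (hcoer : ∀ v : E, α * ‖v‖ ^ 2 ≤ a v v)
    (hcont : ∀ v w : E, |a v w| ≤ γ * ‖v‖ * ‖w‖)
    {W : Submodule ℝ E} {u uW w : E} (huW : uW ∈ W) (hw : w ∈ W)
    (horth : ∀ w ∈ W, a (u - uW) w = 0) :
    α * ‖u - uW‖ ≤ γ * ‖u - w‖ := by
  set e := u - uW
  have hae : a e e = a e (u - w) := by
    have h : a e e = a e (u - w) + a e (w - uW) := by
      rw [← map_add]; congr 1; simp only [e]; abel
    rw [h, horth _ (W.sub_mem hw huW), add_zero]
  have key : α * ‖e‖ * ‖e‖ ≤ γ * ‖u - w‖ * ‖e‖ :=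
    calc α * ‖e‖ * ‖e‖ = α * ‖e‖ ^ 2 := by ring
      _ ≤ a e (u - w) := hae ▸ hcoer e
      _ ≤ γ * ‖e‖ * ‖u - w‖ := (le_abs_self _).trans (hcont e _)
      _ = γ * ‖u - w‖ * ‖e‖ := by ring
  rcases (norm_nonneg e).eq_or_lt with he | he
  · rw [← he, mul_zero]; positivity
  · exact le_of_mul_le_mul_right key he

end Galerkin

theorem rom_error_split_snapshot_general
    {V : Type*} [NormedAddCommGroup V] [InnerProductSpace ℝ V]
    (a : V →ₗ[ℝ] V →ₗ[ℝ] ℝ) (f : V →ₗ[ℝ] ℝ)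
    (α γ : ℝ) (hα : 0 < α)
    (hcoer : ∀ v : V, α * ‖v‖ ^ 2 ≤ a v v)
    (hcont : ∀ v w : V, |a v w| ≤ γ * ‖v‖ * ‖w‖)
    (u : V) (hu : ∀ v : V, a u v = f v)
    (VR : Submodule ℝ V) [FiniteDimensional ℝ ↥VR]
    (un : V)
    (uR : V) (huR : uR ∈ VR) (hGalR : ∀ w ∈ VR, a uR w = f w) :
    ‖u - uR‖ ≤ (γ / α) * ‖un - orthProj VR un‖ + (γ / α) * ‖u - un‖ := by
  rcases subsingleton_or_nontrivial V with _ | _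
  · simp [Subsingleton.elim _ (0 : V)]
  have hγ := nonneg_of_abs_le_mul_norm_mul_norm a hcont
  have hcea := cea_lemma a hγ hcoer hcont huR (orthProj_mem VR un)
    (galerkin_orthogonality a hu hGalR)
  have htri : ‖u - orthProj VR un‖ ≤ ‖un - orthProj VR un‖ + ‖u - un‖ := by
    rw [add_comm]; exact norm_sub_le_norm_sub_add_norm_sub _ _ _
  rw [← mul_add, div_mul_eq_mul_div, le_div_iff₀ hα, mul_comm]
  exact hcea.trans (mul_le_mul_of_nonneg_left htri hγ)

/-- **Error split for the reduced-order solution.** `‖u - u^R‖ ≤ (γ/α)‖u_n - P_{V^R} u_n‖ + (γ/α)‖u - u_n‖`. -/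
theorem rom_error_split_snapshot
    {V : Type*} [NormedAddCommGroup V] [InnerProductSpace ℝ V]
    (a : V →ₗ[ℝ] V →ₗ[ℝ] ℝ) (f : V →ₗ[ℝ] ℝ)
    (α γ : ℝ) (hα : 0 < α)
    (hcoer : ∀ v : V, α * ‖v‖ ^ 2 ≤ a v v)
    (hcont : ∀ v w : V, |a v w| ≤ γ * ‖v‖ * ‖w‖)
    (u : V) (hu : ∀ v : V, a u v = f v)
    (Vn VR : Submodule ℝ V) [FiniteDimensional ℝ ↥Vn] [FiniteDimensional ℝ ↥VR]
    (un : V) (hun : un ∈ Vn) (hGaln : ∀ w ∈ Vn, a un w = f w)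
    (uR : V) (huR : uR ∈ VR) (hGalR : ∀ w ∈ VR, a uR w = f w) :
    ‖u - uR‖ ≤ (γ / α) * ‖un - orthProj VR un‖ + (γ / α) * ‖u - un‖ :=
  rom_error_split_snapshot_general a f α γ hα hcoer hcont u hu VR un uR huR hGalR
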